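/- arXiv:1101.4451 — 2 statements merged into one kernel-verified Lean document; each statement's English description precedes it below -/
import Mathlib

section
/- Let (B^{p,q})_{p,q∈ℤ} be a bicomplex of real vector spaces (d_h : B^{p,q} → B^{p+1,q}, d_v : B^{p,q} → B^{p,q+1}, d_h² = 0, d_v² = 0, d_h d_v + d_v d_h = 0) satisfying: (i) B^{p,q} = 0 unless 0 ≤ −p ≤ q; (ii) there exists P ≥ 0 with B^{p,q} = 0 whenever p < −P; (iii) for every (p,q) with p + q ≠ 0, ker(d_h : B^{p,q} → B^{p+1,q}) = im(d_h : B^{p−1,q} → B^{p,q}). Set Z_h^r := ker(d_h : B^{−r,r} → B^{−r+1,r}) for r ≥ 0. Suppose β : ⊕_{r≥0} Z_h^r → ⊕_{r≥0} B^{−r,r} is any linear map such that for every r and z ∈ Z_h^r, the components c_p ∈ B^{−p,p} of β(z) satisfy c_r = z, c_p = 0 for p < r, and d_v(c_p) + d_h(c_{p+1}) = 0 for all p ≥ 0. Then β is injective and its image is exactly ker(δ : Tot^0 → Tot^1), where Tot^0 = ⊕_{p≥0} B^{−p,p}, Tot^1 = ⊕_{p≥0} B^{−p,p+1} and the component of δ(c)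 in B^{−p,p+1} is d_v(c_p) + d_h(c_{p+1}). In particular β induces a linear isomorphism ⊕_{r≥0} Z_h^r ≅ H^0 of the total complex. -/
/-!
The map `β` is unitriangular with respect to the column filtration: on `z` whose components
below `r` vanish, `β z` also vanishes below `r` and has `r`-th component `z r`, so the lowest
nonzero component of `z` survives in `β z`. Conversely, if a total cocycle `c` vanishes below
`k`, the cocycle equation in degree `k - 1` (or the sector condition when `k = 0`) says that
`c k` is horizontally closed, and subtracting `β (c k)` kills one more component. Horizontal
boundedness makes everything finite, so this terminates after finitely many steps.
-/

def castB (B : ℤ → ℤ → Type*) {q p p' : ℤ} (x : B p q) (h : p = p') : B p' q := h ▸ x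

open Finset

theorem sum_range_single_eq_self {M : ℕ → Type*} [∀ r, AddCommMonoid (M r)] {n : ℕ}
    (hM : ∀ r, n < r → ∀ x : M r, x = 0) (z : ∀ r, M r) :
    ∑ r ∈ range (n + 1), Pi.single r (z r) = z := by
  funext j
  rw [Finset.sum_apply, Finset.sum_pi_single]
  split_ifs with hj
  · rfl
  · exact (hM j (by simpa using hj) _).symm

section Unitriangular

variable {R : Type*} [Ring R] {C : ℕ → Type*} [∀ p, AddCommGroup (C p)]
  [∀ p, Module R (C p)] {S : ∀ p, Submodule R (C p)}

structure IsUnitriangular (β : (∀ r, S r) →ₗ[R] ∀ p, C p) : Prop where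
  apply_single_self : ∀ r (z : S r), β (Pi.single r z) r = z
  apply_single_of_lt : ∀ r (z : S r) p, p < r → β (Pi.single r z) p = 0

namespace IsUnitriangular

variable {β : (∀ r, S r) →ₗ[R] ∀ p, C p} {n : ℕ}

theorem apply_eq_zero_of_forall_lt (hβ : IsUnitriangular β)
    (hC : ∀ p, n < p → ∀ x : C p, x = 0) {z : ∀ r, S r} {r : ℕ} (hz : ∀ s < r, z s = 0)
    {p : ℕ} (hp : p < r) : β z p = 0 := by
  rw [← sum_range_single_eq_self (fun s hs x => Subtype.ext (hC s hs x)) z, map_sum,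
    Finset.sum_apply]
  refine Finset.sum_eq_zero fun s _ => ?_
  rcases lt_or_ge s r with hs | hs
  · rw [hz s hs, Pi.single_zero, map_zero, Pi.zero_apply]
  · exact hβ.apply_single_of_lt s (z s) p (by omega)

theorem apply_self_of_forall_lt (hβ : IsUnitriangular β)
    (hC : ∀ p, n < p → ∀ x : C p, x = 0) {z : ∀ r, S r} {r : ℕ} (hz : ∀ s < r, z s = 0) :
    β z r = z r := by
  have hz' : ∀ s < r + 1, (z - Pi.single (M := fun r => S r) r (z r)) s = 0 := by
    intro s hs
    rcases Nat.lt_succ_iff_lt_or_eq.mp hs with hs | rfl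
    · simp [hz s hs, Pi.single_eq_of_ne hs.ne]
    · simp
  have h := hβ.apply_eq_zero_of_forall_lt hC hz' (Nat.lt_succ_self r)
  rwa [map_sub, Pi.sub_apply, hβ.apply_single_self, sub_eq_zero] at h

theorem injective (hβ : IsUnitriangular β) (hC : ∀ p, n < p → ∀ x : C p, x = 0) :
    Function.Injective β := by
  refine (injective_iff_map_eq_zero β).mpr fun z hz => funext fun r => ?_
  induction r using Nat.strong_induction_on with
  | _ r ih => exact Subtype.ext ((hβ.apply_self_of_forall_lt hC ih).symm.trans (congrFun hz r))

theorem range_eq (hβ : IsUnitriangular β) (hC : ∀ p, n < p → ∀ x : C p, x = 0)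
    (K : Submodule R (∀ p, C p)) (hβK : ∀ r (z : S r), β (Pi.single r z) ∈ K)
    (hlead : ∀ c ∈ K, ∀ k, (∀ p < k, c p = 0) → c k ∈ S k) :
    LinearMap.range β = K := by
  have hmem : ∀ z, β z ∈ K := fun z => by
    rw [← sum_range_single_eq_self (fun s hs x => Subtype.ext (hC s hs x)) z, map_sum]
    exact K.sum_mem fun r _ => hβK r _
  refine le_antisymm (by rintro _ ⟨z, rfl⟩; exact hmem z) fun c hc => ?_
  have approx : ∀ k, ∃ z, ∀ p < k, (c - β z) p = 0 := by
    intro k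
    induction k with
    | zero => exact ⟨0, fun p hp => absurd hp (Nat.not_lt_zero p)⟩
    | succ k ih =>
      obtain ⟨z, hz⟩ := ih
      let w : S k := ⟨(c - β z) k, hlead _ (K.sub_mem hc (hmem z)) k hz⟩
      refine ⟨z + Pi.single k w, fun p hp => ?_⟩
      rw [map_add, ← sub_sub, Pi.sub_apply]
      rcases Nat.lt_succ_iff_lt_or_eq.mp hp with hp | rfl
      · rw [hz p hp, hβ.apply_single_of_lt k w p hp, sub_zero]
      · rw [hβ.apply_single_self]
        exact sub_self _
  obtain ⟨z, hz⟩ := approx (n + 1)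
  refine ⟨z, (sub_eq_zero.mp (funext fun p => ?_)).symm⟩
  rcases lt_or_ge p (n + 1) with hp | hp
  · exact hz p hp
  · exact hC p (by omega) _

end IsUnitriangular

end Unitriangular

section Bicomplex

variable {R : Type*} [Ring R] {B : ℤ → ℤ → Type*} [∀ p q, AddCommGroup (B p q)]
  [∀ p q, Module R (B p q)]

theorem castB_zero {q p p' : ℤ} (h : p = p') : castB B (0 : B p q) h = 0 := by
  subst h; rfl

theorem castB_add {q p p' : ℤ} (h : p = p') (x y : B p q) :
    castB B (x + y) h = castB B x h + castB B y h := by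
  subst h; rfl

theorem castB_smul {q p p' : ℤ} (h : p = p') (a : R) (x : B p q) :
    castB B (a • x) h = a • castB B x h := by
  subst h; rfl

theorem castB_eq_zero_iff {q p p' : ℤ} (h : p = p') (x : B p q) : castB B x h = 0 ↔ x = 0 := by
  subst h; rfl

def totalZeroCocycles (dh : ∀ p q, B p q →ₗ[R] B (p + 1) q)
    (dv : ∀ p q, B p q →ₗ[R] B p (q + 1)) : Submodule R (∀ p : ℕ, B (-(p : ℤ)) (p : ℤ)) where
  carrier := {c | ∀ p : ℕ, dv (-(p : ℤ)) (p : ℤ) (c p)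
    + castB B (dh (-((p : ℤ) + 1)) ((p : ℤ) + 1) (c (p + 1))) (by ring) = 0}
  zero_mem' p := by simp only [Pi.zero_apply, map_zero, castB_zero, add_zero]
  add_mem' {c c'} hc hc' p := by
    simp only [Pi.add_apply, map_add, castB_add]
    rw [add_add_add_comm, hc p, hc' p, add_zero]
  smul_mem' a c hc p := by
    simp only [Pi.smul_apply, map_smul, castB_smul, ← smul_add, hc p, smul_zero]

theorem dh_eq_zero_of_mem_totalZeroCocycles {dh : ∀ p q, B p q →ₗ[R] B (p + 1) q}
    {dv : ∀ p q, B p q →ₗ[R] B p (q + 1)}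
    (hsector : ∀ p q : ℤ, ¬(0 ≤ -p ∧ -p ≤ q) → ∀ x : B p q, x = 0)
    {c : ∀ p : ℕ, B (-(p : ℤ)) (p : ℤ)} (hc : c ∈ totalZeroCocycles dh dv) {k : ℕ}
    (hk : ∀ p < k, c p = 0) : dh (-(k : ℤ)) (k : ℤ) (c k) = 0 := by
  cases k with
  | zero => exact hsector _ _ (by omega) _
  | succ j =>
    have h := hc j
    rw [hk j (Nat.lt_succ_self j), map_zero, zero_add] at h
    exact (castB_eq_zero_iff _ _).mp h

end Bicomplex

/-- for a bicomplex of real vector spaces satisfying (i)-(iii), any linear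
map `β : ⊕_{r≥0} Z_h^r → ⊕_{r≥0} B^{-r,r}` such that each `β(z)`, `z ∈ Z_h^r`, is a total
cocycle of the form `z + l.o.t.` is injective with image exactly
`ker(δ : Tot⁰ → Tot¹)`; in particular it induces an isomorphism `⊕ Z_h^r ≅ H⁰` of the
total complex.  (Here, by (i) and (ii), all but finitely many of the spaces `Z_h^r` and
`B^{-p,p}` are zero, so the direct sums coincide with the products below.) -/
theorem statement10 (B : ℤ → ℤ → Type*)
    [∀ p q, AddCommGroup (B p q)] [∀ p q, Module ℝ (B p q)]
    (dh : ∀ p q, B p q →ₗ[ℝ] B (p + 1) q)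
    (dv : ∀ p q, B p q →ₗ[ℝ] B p (q + 1))
    -- (i): concentration in the sector 0 ≤ -p ≤ q
    (hsector : ∀ p q : ℤ, ¬(0 ≤ -p ∧ -p ≤ q) → ∀ x : B p q, x = 0)
    -- (ii): horizontal boundedness
    (hbound : ∃ P : ℤ, 0 ≤ P ∧ ∀ p q : ℤ, p < -P → ∀ x : B p q, x = 0)
    (β : (∀ r : ℕ, ↥(LinearMap.ker (dh (-(r : ℤ)) (r : ℤ))))
      →ₗ[ℝ] (∀ p : ℕ, B (-(p : ℤ)) (p : ℤ)))
    (hβ : ∀ (r : ℕ) (z : ↥(LinearMap.ker (dh (-(r : ℤ)) (r : ℤ)))),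
      -- leading component `z` ...
      β (Pi.single r z) r = (z : B (-(r : ℤ)) (r : ℤ))
      -- ... vanishing lower components ...
      ∧ (∀ p : ℕ, p < r → β (Pi.single r z) p = 0)
      -- ... and `β z` is a total cocycle of total degree 0
      ∧ ∀ p : ℕ,
          dv (-(p : ℤ)) (p : ℤ) (β (Pi.single r z) p)
            + castB B (dh (-((p : ℤ) + 1)) ((p : ℤ) + 1) (β (Pi.single r z) (p + 1)))
                (by ring) = 0) :
    Function.Injective β
    ∧ ∀ c : ∀ p : ℕ, B (-(p : ℤ)) (p : ℤ),
        c ∈ Set.range β ↔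
          ∀ p : ℕ,
            dv (-(p : ℤ)) (p : ℤ) (c p)
              + castB B (dh (-((p : ℤ) + 1)) ((p : ℤ) + 1) (c (p + 1))) (by ring) = 0 := by
  obtain ⟨P, -, hP⟩ := hbound
  have hC : ∀ p : ℕ, P.toNat < p → ∀ x : B (-(p : ℤ)) (p : ℤ), x = 0 :=
    fun p hp => hP _ _ (by omega)
  have hβU : IsUnitriangular β := ⟨fun r z => (hβ r z).1, fun r z => (hβ r z).2.1⟩
  have hrange : LinearMap.range β = totalZeroCocycles dh dv :=
    hβU.range_eq hC _ (fun r z => (hβ r z).2.2)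
      fun _ hc _ hk => dh_eq_zero_of_mem_totalZeroCocycles hsector hc hk
  exact ⟨hβU.injective hC, fun c => SetLike.ext_iff.mp hrange c⟩
end

section
/- (First-Bianchi-type relation between the ideal order-4 tensors.) In the chart model, let iR_4 and iT_4 be the (1,4)-tensor fields defined pointwise by iR_4(x_1,x_2,x_3,x_4) := (∇_{x_1}R)(x_2,x_3)(x_4) + (1/2)[R(T(x_1,x_2),x_3)(x_4) + R(x_2,T(x_1,x_3))(x_4)] − (1/2)[T(R(x_2,x_3)(x_1),x_4) + T((∇_{x_1}T)(x_2,x_3),x_4) + T(T(T(x_2,x_3),x_1),x_4)] + (1/4)[−2(∇_{x_1}T)(T(x_2,x_3),x_4) − (∇_{x_2}T)(T(x_1,x_3),x_4) + (∇_{x_3}T)(T(x_1,x_2),x_4)] + (1/8)[T(T(x_3,x_4),T(x_1,x_2)) − T(T(x_2,x_4),T(x_1,x_3)) + 2T(T(x_2,x_3),T(x_1,x_4))], and iT_4(x_1,x_2,x_3,x_4) := (1/2)[(∇_{x_1}∇_{x_2}T)(x_3,x_4) + (∇_{x_2}∇_{x_1}T)(x_3,x_4)] − (1/4)[R(x_1,x_3)(T(x_4,x_2))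 + R(x_2,x_3)(T(x_4,x_1)) − R(x_1,x_4)(T(x_3,x_2)) − R(x_2,x_4)(T(x_3,x_1))] + (3/4)[(∇_{x_1}T)(T(x_2,x_3),x_4) + (∇_{x_2}T)(T(x_1,x_3),x_4) − (∇_{x_1}T)(T(x_2,x_4),x_3) − (∇_{x_2}T)(T(x_1,x_4),x_3)] + (1/2)[T((∇_{x_1}T)(x_2,x_3),x_4) + T((∇_{x_2}T)(x_1,x_3),x_4) − T((∇_{x_1}T)(x_2,x_4),x_3) − T((∇_{x_2}T)(x_1,x_4),x_3)]. Then at every point p ∈ E and for all x_1,…,x_4 ∈ E, the cyclic sums over the three cyclic permutations σ of (x_2,x_3,x_4) satisfy Σ_cyc iR_4(x_1,σ(x_2),σ(x_3),σ(x_4)) = − Σ_cyc iT_4(x_1,σ(x_2),σ(x_3),σ(x_4)) (identity (aa) for n = 4). -/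
noncomputable section

/- Chart model of a linear connection with torsion: `E` is a finite-dimensional real
normed vector space and `Γ : E → (E →L[ℝ] E →L[ℝ] E)` a smooth Christoffel map.  Below:
`Tor` is the torsion, `Curv` the curvature (with the sign convention
`R(X,Y)Z = ∇_{[X,Y]}Z − [∇_X,∇_Y]Z`), and `covDer2`, `covDer3` the covariant derivatives
of (1,2)- and (1,3)-tensor fields. -/

variable {E : Type*} [NormedAddCommGroup E] [NormedSpace ℝ E] [FiniteDimensional ℝ E]

/-- The torsion `T(p)(u,v) := Γ(p)(u)(v) − Γ(p)(v)(u)`. -/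
def Tor (Γ : E → (E →L[ℝ] E →L[ℝ] E)) (p u v : E) : E :=
  Γ p u v - Γ p v u

/-- The curvature
`R(p)(u,v)(w) := −(DΓ)(p)(u)(v)(w) + (DΓ)(p)(v)(u)(w) − Γ(p)(u)(Γ(p)(v)(w)) + Γ(p)(v)(Γ(p)(u)(w))`. -/
def Curv (Γ : E → (E →L[ℝ] E →L[ℝ] E)) (p u v w : E) : E :=
  -(fderiv ℝ Γ p u v w) + fderiv ℝ Γ p v u w - Γ p u (Γ p v w) + Γ p v (Γ p u w)

/-- The covariant derivative of a (1,2)-tensor field: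
`(∇A)(p)(x)(z₁,z₂) := (DA)(p)(x)(z₁,z₂) + Γ(p)(x)(A(p)(z₁,z₂)) − A(p)(Γ(p)(x)(z₁),z₂)
− A(p)(z₁,Γ(p)(x)(z₂))`. -/
def covDer2 (Γ : E → (E →L[ℝ] E →L[ℝ] E)) (A : E → E → E → E) (p x z₁ z₂ : E) : E :=
  fderiv ℝ (fun q => A q z₁ z₂) p x + Γ p x (A p z₁ z₂)
    - A p (Γ p x z₁) z₂ - A p z₁ (Γ p x z₂)

/-- The covariant derivative of a (1,3)-tensor field. -/
def covDer3 (Γ : E → (E →L[ℝ] E →L[ℝ] E)) (A : E → E → E → E → E) (p x z₁ z₂ z₃ : E) : E :=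
  fderiv ℝ (fun q => A q z₁ z₂ z₃) p x + Γ p x (A p z₁ z₂ z₃)
    - A p (Γ p x z₁) z₂ z₃ - A p z₁ (Γ p x z₂) z₃ - A p z₁ z₂ (Γ p x z₃)

/-- The symmetrized Christoffel map `Γ̃(p)(u)(v) := (1/2)(Γ(p)(u)(v) + Γ(p)(v)(u))`. -/
def symmGamma (Γ : E → (E →L[ℝ] E →L[ℝ] E)) : E → (E →L[ℝ] E →L[ℝ] E) :=
  fun p => (2 : ℝ)⁻¹ • (Γ p + (Γ p).flip)

/-- The ideal curvature tensor in order 4 (the point `p` is the first argument). -/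
def iR4 (Γ : E → (E →L[ℝ] E →L[ℝ] E)) (p x₁ x₂ x₃ x₄ : E) : E :=
  covDer3 Γ (Curv Γ) p x₁ x₂ x₃ x₄
    + (2 : ℝ)⁻¹ • (Curv Γ p (Tor Γ p x₁ x₂) x₃ x₄ + Curv Γ p x₂ (Tor Γ p x₁ x₃) x₄)
    - (2 : ℝ)⁻¹ • (Tor Γ p (Curv Γ p x₂ x₃ x₁) x₄
        + Tor Γ p (covDer2 Γ (Tor Γ) p x₁ x₂ x₃) x₄
        + Tor Γ p (Tor Γ p (Tor Γ p x₂ x₃) x₁) x₄)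
    + (4 : ℝ)⁻¹ • (-((2 : ℝ) • covDer2 Γ (Tor Γ) p x₁ (Tor Γ p x₂ x₃) x₄)
        - covDer2 Γ (Tor Γ) p x₂ (Tor Γ p x₁ x₃) x₄
        + covDer2 Γ (Tor Γ) p x₃ (Tor Γ p x₁ x₂) x₄)
    + (8 : ℝ)⁻¹ • (Tor Γ p (Tor Γ p x₃ x₄) (Tor Γ p x₁ x₂)
        - Tor Γ p (Tor Γ p x₂ x₄) (Tor Γ p x₁ x₃)
        + (2 : ℝ) • Tor Γ p (Tor Γ p x₂ x₃) (Tor Γ p x₁ x₄))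

/-- The ideal torsion tensor in order 4 (the point `p` is the first argument). -/
def iT4 (Γ : E → (E →L[ℝ] E →L[ℝ] E)) (p x₁ x₂ x₃ x₄ : E) : E :=
  (2 : ℝ)⁻¹ • (covDer3 Γ (covDer2 Γ (Tor Γ)) p x₁ x₂ x₃ x₄
      + covDer3 Γ (covDer2 Γ (Tor Γ)) p x₂ x₁ x₃ x₄)
    - (4 : ℝ)⁻¹ • (Curv Γ p x₁ x₃ (Tor Γ p x₄ x₂) + Curv Γ p x₂ x₃ (Tor Γ p x₄ x₁)
        - Curv Γ p x₁ x₄ (Tor Γ p x₃ x₂) - Curv Γ p x₂ x₄ (Tor Γ p x₃ x₁))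
    + (3 / 4 : ℝ) • (covDer2 Γ (Tor Γ) p x₁ (Tor Γ p x₂ x₃) x₄
        + covDer2 Γ (Tor Γ) p x₂ (Tor Γ p x₁ x₃) x₄
        - covDer2 Γ (Tor Γ) p x₁ (Tor Γ p x₂ x₄) x₃
        - covDer2 Γ (Tor Γ) p x₂ (Tor Γ p x₁ x₄) x₃)
    + (2 : ℝ)⁻¹ • (Tor Γ p (covDer2 Γ (Tor Γ) p x₁ x₂ x₃) x₄
        + Tor Γ p (covDer2 Γ (Tor Γ) p x₂ x₁ x₃) x₄
        - Tor Γ p (covDer2 Γ (Tor Γ) p x₁ x₂ x₄) x₃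
        - Tor Γ p (covDer2 Γ (Tor Γ) p x₂ x₁ x₄) x₃)

/-! In the chart every term of both sides is a polynomial expression in the jets `Γ p`, `DΓ p`
and `D²Γ p`, evaluated on `x₁, …, x₄`. Expanding the covariant derivatives of `R`, `T` and `∇T`
into these jets, the identity becomes a formal rational linear relation between such
monomials, which holds once `D²Γ p` is known to be symmetric (Schwarz). -/

section
variable {E F G : Type*} [NormedAddCommGroup E] [NormedSpace ℝ E] [NormedAddCommGroup F]
  [NormedSpace ℝ F] [NormedAddCommGroup G] [NormedSpace ℝ G] {Γ : E → E →L[ℝ] E →L[ℝ] E} {p : E}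

theorem fderiv_clm_apply_apply {A : E → F →L[ℝ] G} {f : E → F} (hA : DifferentiableAt ℝ A p)
    (hf : DifferentiableAt ℝ f p) (a : E) :
    fderiv ℝ (fun q => A q (f q)) p a = fderiv ℝ A p a (f p) + A p (fderiv ℝ f p a) := by
  rw [fderiv_clm_apply hA hf, add_apply, add_comm]
  rfl

theorem fderiv_tor_apply (hΓ : DifferentiableAt ℝ Γ p) (a u v : E) :
    fderiv ℝ (fun q => Tor Γ q u v) p a = fderiv ℝ Γ p a u v - fderiv ℝ Γ p a v u := by
  unfold Tor
  simp (disch := fun_prop) only [fderiv_fun_sub, sub_apply, fderiv_clm_apply_apply,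
    fderiv_fun_const, Pi.zero_apply, zero_apply, map_zero, add_zero]

theorem fderiv_curv_apply (hΓ : DifferentiableAt ℝ Γ p)
    (hDΓ : DifferentiableAt ℝ (fderiv ℝ Γ) p) (a u v w : E) :
    fderiv ℝ (fun q => Curv Γ q u v w) p a =
      -(fderiv ℝ (fderiv ℝ Γ) p a u v w) + fderiv ℝ (fderiv ℝ Γ) p a v u w
      - fderiv ℝ Γ p a u (Γ p v w) - Γ p u (fderiv ℝ Γ p a v w)
      + fderiv ℝ Γ p a v (Γ p u w) + Γ p v (fderiv ℝ Γ p a u w) := by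
  unfold Curv
  simp (disch := fun_prop) only [fderiv_fun_add, fderiv_fun_sub, fderiv_fun_neg, add_apply,
    sub_apply, neg_apply, fderiv_clm_apply_apply, fderiv_fun_const, Pi.zero_apply, zero_apply,
    map_zero, add_zero]
  abel

theorem covDer2_tor_eq (hΓ : DifferentiableAt ℝ Γ p) (x u v : E) :
    covDer2 Γ (Tor Γ) p x u v =
      fderiv ℝ Γ p x u v - fderiv ℝ Γ p x v u + (Γ p x (Γ p u v) - Γ p x (Γ p v u))
        - (Γ p (Γ p x u) v - Γ p v (Γ p x u)) - (Γ p u (Γ p x v) - Γ p (Γ p x v) u) := by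
  rw [covDer2, fderiv_tor_apply hΓ]
  simp only [Tor, map_sub]

theorem fderiv_covDer2_tor_apply (hΓ : Differentiable ℝ Γ)
    (hDΓ : DifferentiableAt ℝ (fderiv ℝ Γ) p) (a x u v : E) :
    fderiv ℝ (fun q => covDer2 Γ (Tor Γ) q x u v) p a =
      fderiv ℝ (fderiv ℝ Γ) p a x u v - fderiv ℝ (fderiv ℝ Γ) p a x v u
      + (fderiv ℝ Γ p a x (Γ p u v) + Γ p x (fderiv ℝ Γ p a u v)
          - fderiv ℝ Γ p a x (Γ p v u) - Γ p x (fderiv ℝ Γ p a v u))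
      - (fderiv ℝ Γ p a (Γ p x u) v + Γ p (fderiv ℝ Γ p a x u) v
          - fderiv ℝ Γ p a v (Γ p x u) - Γ p v (fderiv ℝ Γ p a x u))
      - (fderiv ℝ Γ p a u (Γ p x v) + Γ p u (fderiv ℝ Γ p a x v)
          - fderiv ℝ Γ p a (Γ p x v) u - Γ p (fderiv ℝ Γ p a x v) u) := by
  simp_rw [covDer2_tor_eq (hΓ _)]
  -- `fun_prop` cannot split `fun q => Γ q (f q)` unaided; it can use this uncurried form.
  have hΓ' : Differentiable ℝ (fun y : E × E => Γ y.1 y.2) :=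
    (hΓ.comp differentiable_fst).clm_apply differentiable_snd
  simp (disch := fun_prop) only [fderiv_fun_sub, fderiv_fun_add, sub_apply, add_apply,
    fderiv_clm_apply_apply, fderiv_fun_const, Pi.zero_apply, zero_apply, map_zero, add_zero]
  abel

end

set_option maxHeartbeats 400000 in
/-- the first-Bianchi-type relation (aa) between the ideal order-4 tensors:
the cyclic sums over the cyclic permutations of `(x₂,x₃,x₄)` satisfy
`Σ_cyc iR₄(x₁,·,·,·) = − Σ_cyc iT₄(x₁,·,·,·)`. -/
theorem statement16 (Γ : E → (E →L[ℝ] E →L[ℝ] E)) (hΓ : ContDiff ℝ (⊤ : ℕ∞) Γ)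
    (p x₁ x₂ x₃ x₄ : E) :
    iR4 Γ p x₁ x₂ x₃ x₄ + iR4 Γ p x₁ x₃ x₄ x₂ + iR4 Γ p x₁ x₄ x₂ x₃
      = -(iT4 Γ p x₁ x₂ x₃ x₄ + iT4 Γ p x₁ x₃ x₄ x₂ + iT4 Γ p x₁ x₄ x₂ x₃) := by
  have hΓ₂ : ContDiff ℝ 2 Γ := hΓ.of_le (WithTop.coe_le_coe.2 le_top)
  have hΓ₁ : Differentiable ℝ Γ := hΓ₂.differentiable (by simp)
  have hDΓ : Differentiable ℝ (fderiv ℝ Γ) :=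
    (hΓ₂.fderiv_right (m := 1) le_rfl).differentiable (by simp)
  have hsymm : IsSymmSndFDerivAt ℝ Γ p := hΓ₂.contDiffAt.isSymmSndFDerivAt (by simp)
  simp only [iR4, iT4, covDer3, fderiv_curv_apply (hΓ₁ p) (hDΓ p), fderiv_covDer2_tor_apply hΓ₁ (hDΓ p),
    covDer2_tor_eq (hΓ₁ p)]
  simp only [Curv, Tor, hsymm.eq x₂ x₁, hsymm.eq x₃ x₁, hsymm.eq x₄ x₁, map_add, map_sub, map_neg,
    add_apply, sub_apply, neg_apply]
  -- clear the denominators 2, 4, 8 so that `abel` can close an `ℕ`-linear identity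
  apply smul_right_injective E (by norm_num : (8 : ℝ) ≠ 0)
  simp only [smul_add, smul_sub, smul_neg, smul_smul]
  norm_num only [one_smul]
  simp only [ofNat_smul_eq_nsmul]
  abel
end
end
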